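/- For all real numbers λ with 0 ≤ λ ≤ 1 and all real s, κ with 0 < s ≤ κ ≤ 1, it holds that 0 ≤ ((s+κ)/s)(1−λ^s) ≤ λ^{−κ}, where for λ = 0 the right-hand side is interpreted as +∞ (so the inequality trivially holds); equivalently, for λ ∈ (0,1]: ((s+κ)/s)(1−λ^s) ≤ λ^{−κ}. -/

import Mathlib

open Real

lemma Real.one_sub_rpow_le_neg_mul_log {x : ℝ} (hx : 0 < x) (s : ℝ) :
    1 - x ^ s ≤ s * -log x := by
  rw [rpow_def_of_pos hx]
  linarith [add_one_le_exp (log x * s)]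

theorem stmt5_general (lam s kappa : ℝ) (hlam : lam ∈ Set.Ioc (0 : ℝ) 1)
    (hs : 0 < s) (hsk : s ≤ kappa) :
    0 ≤ (s + kappa) / s * (1 - lam ^ s) ∧
      (s + kappa) / s * (1 - lam ^ s) ≤ lam ^ (-kappa) := by
  obtain ⟨hlam0, hlam1⟩ := hlam
  have hfactor : 0 ≤ (s + kappa) / s := div_nonneg (by linarith) hs.le
  have ht : 0 ≤ -log lam := neg_nonneg.mpr (log_nonpos hlam0.le hlam1)
  refine ⟨mul_nonneg hfactor (sub_nonneg.mpr (rpow_le_one hlam0.le hlam1 hs.le)), ?_⟩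
  calc (s + kappa) / s * (1 - lam ^ s)
      ≤ (s + kappa) / s * (s * -log lam) :=
        mul_le_mul_of_nonneg_left (one_sub_rpow_le_neg_mul_log hlam0 s) hfactor
    _ = (s + kappa) * -log lam := by field_simp
    _ ≤ 2 * kappa * -log lam := mul_le_mul_of_nonneg_right (by linarith) ht
    _ = 2 * (kappa * -log lam) := mul_assoc ..
    _ ≤ exp (kappa * -log lam) := two_mul_le_exp
    _ = lam ^ (-kappa) := by rw [rpow_def_of_pos hlam0]; ring_nf

/-- For `λ ∈ (0,1]`, `0 < s ≤ κ ≤ 1`: `0 ≤ ((s+κ)/s)(1−λ^s) ≤ λ^{−κ}`. -/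
theorem stmt5 (lam s kappa : ℝ) (hlam : lam ∈ Set.Ioc (0 : ℝ) 1)
    (hs : 0 < s) (hsk : s ≤ kappa) (hk : kappa ≤ 1) :
    0 ≤ (s + kappa) / s * (1 - lam ^ s) ∧
      (s + kappa) / s * (1 - lam ^ s) ≤ lam ^ (-kappa) :=
  stmt5_general lam s kappa hlam hs hsk
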